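/- For every N ≥ 2: sSup { Q_AD(MSE_N(ν), PA_N(ν)) : ν an N-node strategy with PA_N(ν) > 0 } = sSup { Q_AD(MSE_2(κ), PA_2(κ)) : κ a 2-node strategy with PA_2(κ) > 0 }. In particular, if ν* is a best response among N-node strategies and κ* is a best response among 2-node strategies, then Q_AD(MSE_N(ν*), PA_N(ν*)) = Q_AD(MSE_2(κ*), PA_2(κ*)): the adversary's optimal utility does not increase with the number of adversarial nodes. -/

import Mathlib

open MeasureTheory ProbabilityTheory

noncomputable section

def midN (N : ℕ) (p : ℝ × (Fin (N-1) → ℝ)) : ℝ :=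
  (max p.1 (⨆ i, p.2 i) + min p.1 (⨅ i, p.2 i)) / 2

def accN (N : ℕ) (η Δ : ℝ) : Set (ℝ × (Fin (N-1) → ℝ)) :=
  {p | max p.1 (⨆ i, p.2 i) - min p.1 (⨅ i, p.2 i) ≤ η * Δ}

def PA_N (N : ℕ) (η Δ : ℝ) (μ : Measure ℝ) (ν : Measure (Fin (N-1) → ℝ)) : ℝ :=
  ((μ.prod ν) (accN N η Δ)).toReal

def MSE_N (N : ℕ) (η Δ : ℝ) (μ : Measure ℝ) (ν : Measure (Fin (N-1) → ℝ)) : ℝ :=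
  ∫ p, (midN N p) ^ 2 ∂((μ.prod ν)[|accN N η Δ])

def mid2 (p : ℝ × ℝ) : ℝ := (max p.1 p.2 + min p.1 p.2) / 2

def acc2 (η Δ : ℝ) : Set (ℝ × ℝ) := {p | max p.1 p.2 - min p.1 p.2 ≤ η * Δ}

def PA_2 (η Δ : ℝ) (μ κ : Measure ℝ) : ℝ := ((μ.prod κ) (acc2 η Δ)).toReal

def MSE_2 (η Δ : ℝ) (μ κ : Measure ℝ) : ℝ :=
  ∫ p, (mid2 p) ^ 2 ∂((μ.prod κ)[|acc2 η Δ])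

def cN (N : ℕ) (η Δ : ℝ) (μ : Measure ℝ) (α : ℝ) : ℝ :=
  sSup {r | ∃ ν : Measure (Fin (N-1) → ℝ), IsProbabilityMeasure ν ∧
    α ≤ PA_N N η Δ μ ν ∧ r = MSE_N N η Δ μ ν}

def c2 (η Δ : ℝ) (μ : Measure ℝ) (α : ℝ) : ℝ :=
  sSup {r | ∃ κ : Measure ℝ, IsProbabilityMeasure κ ∧
    α ≤ PA_2 η Δ μ κ ∧ r = MSE_2 η Δ μ κ}

def IsBestResponseN (N : ℕ) (η Δ : ℝ) (μ : Measure ℝ) (QAD : ℝ → ℝ → ℝ)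
    (ν : Measure (Fin (N-1) → ℝ)) : Prop :=
  IsProbabilityMeasure ν ∧ 0 < PA_N N η Δ μ ν ∧
    ∀ ν' : Measure (Fin (N-1) → ℝ), IsProbabilityMeasure ν' → 0 < PA_N N η Δ μ ν' →
      QAD (MSE_N N η Δ μ ν') (PA_N N η Δ μ ν') ≤ QAD (MSE_N N η Δ μ ν) (PA_N N η Δ μ ν)

def IsBestResponse2 (η Δ : ℝ) (μ : Measure ℝ) (QAD : ℝ → ℝ → ℝ) (κ : Measure ℝ) : Prop :=
  IsProbabilityMeasure κ ∧ 0 < PA_2 η Δ μ κ ∧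
    ∀ κ' : Measure ℝ, IsProbabilityMeasure κ' → 0 < PA_2 η Δ μ κ' →
      QAD (MSE_2 η Δ μ κ') (PA_2 η Δ μ κ') ≤ QAD (MSE_2 η Δ μ κ) (PA_2 η Δ μ κ)

/-!
Only the range `[m, M]` of the adversarial reports enters acceptance and the midpoint. Replacing
them by the single report `collapse η Δ m M` gives, for every honest value `|n| ≤ Δ` (using
`η ≥ 2`), the same acceptance decision and a squared midpoint at least as large. Pushing an
`N`-node strategy forward along this map therefore yields a 2-node strategy with the same acceptance
probability and no smaller MSE, while a 2-node strategy is an `N`-node one with all adversarial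
nodes reporting the same value. Each utility set thus dominates the other, so the suprema agree
(also when unbounded, where both are the junk value `0`), and best responses attain them.
-/

open Set

section Collapse

variable {η Δ m M n : ℝ}

lemma max_sub_min_le_iff_of_nonneg_add (hηΔ : 2 * Δ ≤ η * Δ) (hn : n ∈ Icc (-Δ) Δ)
    (hmM : m ≤ M) (hsum : 0 ≤ M + m) (hspread : M - m ≤ η * Δ) :
    max n M - min n m ≤ η * Δ ↔ |M - n| ≤ η * Δ := by
  obtain ⟨hn₁, hn₂⟩ := hn
  rw [abs_sub_le_iff]
  rcases le_total n M with h₁ | h₁ <;> rcases le_total n m with h₂ | h₂ <;>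
    simp only [max_eq_left, max_eq_right, min_eq_left, min_eq_right, h₁, h₂] <;>
    constructor <;> intro h <;> (try constructor) <;> linarith

lemma sq_max_add_min_le_of_nonneg_add (hmM : m ≤ M) (hsum : 0 ≤ M + m) :
    (max n M + min n m) ^ 2 ≤ (n + M) ^ 2 := by
  rcases le_total n m with h | h
  · rw [max_eq_right (h.trans hmM), min_eq_left h, add_comm]
  · rw [min_eq_right h]
    have hle : max n M + m ≤ n + M := by
      rw [← max_add_min n M]
      gcongr
      exact le_min h hmM
    exact pow_le_pow_left₀ (by linarith [le_max_right n M]) hle 2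

lemma max_sub_min_le_iff_of_add_nonpos (hηΔ : 2 * Δ ≤ η * Δ) (hn : n ∈ Icc (-Δ) Δ)
    (hmM : m ≤ M) (hsum : M + m ≤ 0) (hspread : M - m ≤ η * Δ) :
    max n M - min n m ≤ η * Δ ↔ |m - n| ≤ η * Δ := by
  have := max_sub_min_le_iff_of_nonneg_add hηΔ (n := -n) ⟨by linarith [hn.2], by linarith [hn.1]⟩
    (neg_le_neg hmM) (by linarith) (by linarith)
  rwa [max_neg_neg, min_neg_neg, neg_sub_neg, neg_sub_neg, abs_sub_comm] at this

lemma sq_max_add_min_le_of_add_nonpos (hmM : m ≤ M) (hsum : M + m ≤ 0) :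
    (max n M + min n m) ^ 2 ≤ (n + m) ^ 2 := by
  have := sq_max_add_min_le_of_nonneg_add (n := -n) (neg_le_neg hmM) (by linarith)
  rwa [max_neg_neg, min_neg_neg, ← neg_add, neg_sq, ← neg_add, neg_sq, add_comm (min n m)] at this

/-- The single report replacing adversarial reports with range `[m, M]`: if the range is wider than
`ηΔ` every honest value is rejected, and so is the far report `(η + 2)Δ`; otherwise the endpoint of
larger absolute value. -/
def collapse (η Δ m M : ℝ) : ℝ :=
  if η * Δ < M - m then (η + 2) * Δ else if 0 ≤ M + m then M else m

lemma collapse_spec (hΔ : 0 < Δ) (hη : 2 ≤ η) (hn : n ∈ Icc (-Δ) Δ) (hmM : m ≤ M) :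
    (max n M - min n m ≤ η * Δ ↔ |collapse η Δ m M - n| ≤ η * Δ) ∧
      (max n M - min n m ≤ η * Δ → (max n M + min n m) ^ 2 ≤ (n + collapse η Δ m M) ^ 2) := by
  have hηΔ : 2 * Δ ≤ η * Δ := by gcongr
  unfold collapse
  split_ifs with hfar hsum
  · have hrejN : ¬ max n M - min n m ≤ η * Δ := by
      linarith [le_max_right n M, min_le_right n m]
    have hrej₂ : ¬ |(η + 2) * Δ - n| ≤ η * Δ := by
      rw [abs_le, not_and_or]
      right
      linarith [hn.2]
    exact ⟨iff_of_false hrejN hrej₂, fun h => absurd h hrejN⟩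
  · exact ⟨max_sub_min_le_iff_of_nonneg_add hηΔ hn hmM hsum (not_lt.1 hfar),
      fun _ => sq_max_add_min_le_of_nonneg_add hmM hsum⟩
  · exact ⟨max_sub_min_le_iff_of_add_nonpos hηΔ hn hmM (not_le.1 hsum).le (not_lt.1 hfar),
      fun _ => sq_max_add_min_le_of_add_nonpos hmM (not_le.1 hsum).le⟩

end Collapse

section MeasureTransfer

variable {X Y : Type*} [MeasurableSpace X] [MeasurableSpace Y]

lemma map_apply_of_preimage_ae_eq {P : Measure X} {F : X → Y} (hF : Measurable F) {A : Set X}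
    {B : Set Y} (hB : MeasurableSet B) (h : F ⁻¹' B =ᵐ[P] A) : P.map F B = P A := by
  rw [Measure.map_apply hF hB, measure_congr h]

lemma cond_map_of_preimage_ae_eq {P : Measure X} {F : X → Y} (hF : Measurable F) {A : Set X}
    {B : Set Y} (hB : MeasurableSet B) (h : F ⁻¹' B =ᵐ[P] A) : (P.map F)[|B] = (P[|A]).map F := by
  rw [ProbabilityTheory.cond, ProbabilityTheory.cond, Measure.map_smul, Measure.restrict_map hF hB,
    Measure.restrict_congr_set h, map_apply_of_preimage_ae_eq hF hB h]

lemma prod_map_right {Z : Type*} [MeasurableSpace Z] (μ : Measure X) [SFinite μ] (ν : Measure Y)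
    [SFinite ν] {g : Y → Z} (hg : Measurable g) :
    μ.prod (ν.map g) = (μ.prod ν).map (Prod.map id g) := by
  rw [← Measure.map_prod_map μ ν measurable_id hg, Measure.map_id]

lemma ae_fst_mem_prod {μ : Measure X} [IsProbabilityMeasure μ] {s : Set X} (hs : MeasurableSet s)
    (hμs : μ s = 1) (ν : Measure Y) [SFinite ν] : ∀ᵐ p ∂μ.prod ν, p.1 ∈ s :=
  Measure.quasiMeasurePreserving_fst.ae (mem_ae_iff.2 ((prob_compl_eq_zero_iff hs).2 hμs))

end MeasureTransfer

section Protocol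

variable {N : ℕ} {η Δ : ℝ}

lemma mid2_eq (q : ℝ × ℝ) : mid2 q = (q.1 + q.2) / 2 := by
  rw [mid2, max_add_min]

lemma mem_acc2 {q : ℝ × ℝ} : q ∈ acc2 η Δ ↔ |q.2 - q.1| ≤ η * Δ := by
  rw [← max_sub_min_eq_abs]
  rfl

lemma abs_mid2_le {q : ℝ × ℝ} (hq : q ∈ acc2 η Δ) : |mid2 q| ≤ |q.1| + η * Δ / 2 := by
  rw [mem_acc2] at hq
  have : |q.1 + q.2| ≤ 2 * |q.1| + |q.2 - q.1| := by
    calc |q.1 + q.2| = |2 * q.1 + (q.2 - q.1)| := by ring_nf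
      _ ≤ |2 * q.1| + |q.2 - q.1| := abs_add_le _ _
      _ = 2 * |q.1| + |q.2 - q.1| := by rw [abs_mul, abs_two]
  rw [mid2_eq, abs_div, abs_two]
  linarith

@[fun_prop]
lemma measurable_mid2 : Measurable mid2 := by
  unfold mid2
  fun_prop

lemma measurableSet_acc2 : MeasurableSet (acc2 η Δ) :=
  measurableSet_le (by fun_prop) measurable_const

@[fun_prop]
lemma measurable_iSup_apply {ι : Type*} [Countable ι] :
    Measurable (fun x : ι → ℝ => ⨆ i, x i) :=
  Measurable.iSup measurable_pi_apply

@[fun_prop]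
lemma measurable_iInf_apply {ι : Type*} [Countable ι] :
    Measurable (fun x : ι → ℝ => ⨅ i, x i) :=
  Measurable.iInf measurable_pi_apply

@[fun_prop]
lemma measurable_midN : Measurable (midN N) := by
  unfold midN
  fun_prop

lemma measurableSet_accN : MeasurableSet (accN N η Δ) :=
  measurableSet_le (by fun_prop) measurable_const

lemma integrable_sq_mid2_cond {μ : Measure ℝ} [IsProbabilityMeasure μ]
    (hμ : μ (Icc (-Δ) Δ) = 1) (κ : Measure ℝ) [SFinite κ] :
    Integrable (fun q => mid2 q ^ 2) ((μ.prod κ)[|acc2 η Δ]) := by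
  refine .of_bound (by fun_prop) ((Δ + η * Δ / 2) ^ 2) ?_
  filter_upwards [ae_cond_mem measurableSet_acc2,
    cond_absolutelyContinuous.ae_le (ae_fst_mem_prod measurableSet_Icc hμ κ)] with q hq hq₁
  rw [norm_pow, Real.norm_eq_abs]
  refine pow_le_pow_left₀ (abs_nonneg _) ((abs_mid2_le hq).trans ?_) 2
  gcongr
  exact abs_le.2 hq₁

def collapseVec (N : ℕ) (η Δ : ℝ) (x : Fin (N-1) → ℝ) : ℝ :=
  collapse η Δ (⨅ i, x i) (⨆ i, x i)

lemma measurable_collapseVec : Measurable (collapseVec N η Δ) := by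
  unfold collapseVec collapse
  refine Measurable.ite (measurableSet_lt measurable_const (by fun_prop)) measurable_const
    (Measurable.ite (measurableSet_le measurable_const (by fun_prop)) (by fun_prop) (by fun_prop))

lemma measurable_prodMap_collapseVec : Measurable (Prod.map (@id ℝ) (collapseVec N η Δ)) :=
  measurable_id.prodMap measurable_collapseVec

lemma measurable_prodMap_const :
    Measurable (Prod.map id (Function.const (Fin (N-1))) : ℝ × ℝ → ℝ × (Fin (N-1) → ℝ)) := by
  fun_prop

variable [Nonempty (Fin (N-1))]

lemma collapseVec_spec (hΔ : 0 < Δ) (hη : 2 ≤ η) {p : ℝ × (Fin (N-1) → ℝ)}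
    (hp : p.1 ∈ Icc (-Δ) Δ) :
    (p ∈ accN N η Δ ↔ (p.1, collapseVec N η Δ p.2) ∈ acc2 η Δ) ∧
      (p ∈ accN N η Δ → midN N p ^ 2 ≤ mid2 (p.1, collapseVec N η Δ p.2) ^ 2) := by
  have hle : ⨅ i, p.2 i ≤ ⨆ i, p.2 i :=
    ciInf_le_ciSup (finite_range _).bddBelow (finite_range _).bddAbove
  obtain ⟨hacc, hsq⟩ := collapse_spec hΔ hη hp hle
  rw [mem_acc2, mid2_eq]
  refine ⟨hacc, fun h => ?_⟩
  rw [midN, div_pow, div_pow]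
  gcongr ?_ / _
  exact hsq h

lemma preimage_acc2_ae_eq_accN (hΔ : 0 < Δ) (hη : 2 ≤ η) {μ : Measure ℝ}
    [IsProbabilityMeasure μ] (hμ : μ (Icc (-Δ) Δ) = 1) (ν : Measure (Fin (N-1) → ℝ)) [SFinite ν] :
    Prod.map (@id ℝ) (collapseVec N η Δ) ⁻¹' acc2 η Δ =ᵐ[μ.prod ν] accN N η Δ := by
  filter_upwards [ae_fst_mem_prod measurableSet_Icc hμ ν] with p hp
  exact propext (collapseVec_spec hΔ hη hp).1.symm

lemma PA_2_map_collapseVec (hΔ : 0 < Δ) (hη : 2 ≤ η) {μ : Measure ℝ} [IsProbabilityMeasure μ]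
    (hμ : μ (Icc (-Δ) Δ) = 1) (ν : Measure (Fin (N-1) → ℝ)) [SFinite ν] :
    PA_2 η Δ μ (ν.map (collapseVec N η Δ)) = PA_N N η Δ μ ν := by
  rw [PA_2, PA_N, prod_map_right μ ν measurable_collapseVec,
    map_apply_of_preimage_ae_eq measurable_prodMap_collapseVec measurableSet_acc2
      (preimage_acc2_ae_eq_accN hΔ hη hμ ν)]

lemma MSE_N_le_MSE_2_map_collapseVec (hΔ : 0 < Δ) (hη : 2 ≤ η) {μ : Measure ℝ}
    [IsProbabilityMeasure μ] (hμ : μ (Icc (-Δ) Δ) = 1) (ν : Measure (Fin (N-1) → ℝ)) [SFinite ν] :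
    MSE_N N η Δ μ ν ≤ MSE_2 η Δ μ (ν.map (collapseVec N η Δ)) := by
  have hcond : (μ.prod (ν.map (collapseVec N η Δ)))[|acc2 η Δ] =
      ((μ.prod ν)[|accN N η Δ]).map (Prod.map id (collapseVec N η Δ)) := by
    rw [prod_map_right μ ν measurable_collapseVec,
      cond_map_of_preimage_ae_eq measurable_prodMap_collapseVec measurableSet_acc2
        (preimage_acc2_ae_eq_accN hΔ hη hμ ν)]
  have hint := integrable_sq_mid2_cond hμ (ν.map (collapseVec N η Δ)) (η := η)
  rw [hcond] at hint
  rw [MSE_2, hcond, integral_map measurable_prodMap_collapseVec.aemeasurable (by fun_prop)]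
  refine integral_mono_of_nonneg (ae_of_all _ fun _ => sq_nonneg _)
    (hint.comp_measurable measurable_prodMap_collapseVec) ?_
  filter_upwards [ae_cond_mem measurableSet_accN,
    cond_absolutelyContinuous.ae_le (ae_fst_mem_prod measurableSet_Icc hμ ν)] with p hp hp₁
  exact (collapseVec_spec hΔ hη hp₁).2 hp

lemma preimage_accN_const :
    Prod.map id (Function.const (Fin (N-1))) ⁻¹' accN N η Δ = acc2 η Δ := by
  ext p
  simp only [accN, acc2, mem_preimage, mem_ofPred_eq, Prod.map, id_eq, Function.const_apply,
    ciSup_const, ciInf_const]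

lemma midN_const (q : ℝ × ℝ) : midN N (Prod.map id (Function.const (Fin (N-1))) q) = mid2 q := by
  simp only [midN, mid2, Prod.map, id_eq, Function.const_apply, ciSup_const, ciInf_const]

lemma PA_N_map_const (μ : Measure ℝ) [SFinite μ] (κ : Measure ℝ) [SFinite κ] :
    PA_N N η Δ μ (κ.map (Function.const (Fin (N-1)))) = PA_2 η Δ μ κ := by
  rw [PA_N, PA_2, prod_map_right μ κ (by fun_prop), Measure.map_apply measurable_prodMap_const
    measurableSet_accN, preimage_accN_const]

lemma MSE_N_map_const (μ : Measure ℝ) [SFinite μ] (κ : Measure ℝ) [SFinite κ] :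
    MSE_N N η Δ μ (κ.map (Function.const (Fin (N-1)))) = MSE_2 η Δ μ κ := by
  rw [MSE_N, MSE_2, prod_map_right μ κ (by fun_prop), cond_map_of_preimage_ae_eq (A := acc2 η Δ)
    measurable_prodMap_const measurableSet_accN (.of_eq preimage_accN_const),
    integral_map measurable_prodMap_const.aemeasurable (by fun_prop)]
  simp only [midN_const]

end Protocol

section Utility

variable (N : ℕ) (η Δ : ℝ) (μ : Measure ℝ) (QAD : ℝ → ℝ → ℝ)

def utilitiesN : Set ℝ :=
  {u | ∃ ν : Measure (Fin (N-1) → ℝ), IsProbabilityMeasure ν ∧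
    0 < PA_N N η Δ μ ν ∧ u = QAD (MSE_N N η Δ μ ν) (PA_N N η Δ μ ν)}

def utilities2 : Set ℝ :=
  {u | ∃ κ : Measure ℝ, IsProbabilityMeasure κ ∧
    0 < PA_2 η Δ μ κ ∧ u = QAD (MSE_2 η Δ μ κ) (PA_2 η Δ μ κ)}

variable {N η Δ μ QAD}

lemma IsBestResponseN.isGreatest {ν : Measure (Fin (N-1) → ℝ)}
    (h : IsBestResponseN N η Δ μ QAD ν) :
    IsGreatest (utilitiesN N η Δ μ QAD) (QAD (MSE_N N η Δ μ ν) (PA_N N η Δ μ ν)) := by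
  obtain ⟨hν, hpos, hmax⟩ := h
  refine ⟨⟨ν, hν, hpos, rfl⟩, ?_⟩
  rintro _ ⟨ν', hν', hpos', rfl⟩
  exact hmax ν' hν' hpos'

lemma IsBestResponse2.isGreatest {κ : Measure ℝ} (h : IsBestResponse2 η Δ μ QAD κ) :
    IsGreatest (utilities2 η Δ μ QAD) (QAD (MSE_2 η Δ μ κ) (PA_2 η Δ μ κ)) := by
  obtain ⟨hκ, hpos, hmax⟩ := h
  refine ⟨⟨κ, hκ, hpos, rfl⟩, ?_⟩
  rintro _ ⟨κ', hκ', hpos', rfl⟩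
  exact hmax κ' hκ' hpos'

lemma exists_utilities2_ge (hΔ : 0 < Δ) (hη : 2 ≤ η) [IsProbabilityMeasure μ]
    (hμ : μ (Icc (-Δ) Δ) = 1) (hQ : ∀ y, Monotone fun x => QAD x y) [Nonempty (Fin (N-1))] :
    ∀ u ∈ utilitiesN N η Δ μ QAD, ∃ v ∈ utilities2 η Δ μ QAD, u ≤ v := by
  rintro _ ⟨ν, hν, hpos, rfl⟩
  have hPA := PA_2_map_collapseVec hΔ hη hμ ν
  refine ⟨_, ⟨_, Measure.isProbabilityMeasure_map measurable_collapseVec.aemeasurable,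
    hPA ▸ hpos, rfl⟩, ?_⟩
  rw [hPA]
  exact hQ _ (MSE_N_le_MSE_2_map_collapseVec hΔ hη hμ ν)

lemma utilities2_subset_utilitiesN [SFinite μ] [Nonempty (Fin (N-1))] :
    utilities2 η Δ μ QAD ⊆ utilitiesN N η Δ μ QAD := by
  rintro _ ⟨κ, hκ, hpos, rfl⟩
  refine ⟨κ.map (Function.const (Fin (N-1))),
    Measure.isProbabilityMeasure_map (by fun_prop), ?_, ?_⟩
  · rwa [PA_N_map_const]
  · rw [PA_N_map_const, MSE_N_map_const]

end Utility

theorem stmt14_general {N : ℕ} (hN : 2 ≤ N) {η Δ : ℝ} (hΔ : 0 < Δ) (hη : 2 ≤ η)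
    (μ : Measure ℝ) [IsProbabilityMeasure μ] (hμ : μ (Set.Icc (-Δ) Δ) = 1)
    (QAD : ℝ → ℝ → ℝ)
    (hQ1 : ∀ y : ℝ, StrictMono fun x => QAD x y) :
    sSup {u : ℝ | ∃ ν : Measure (Fin (N-1) → ℝ), IsProbabilityMeasure ν ∧
        0 < PA_N N η Δ μ ν ∧ u = QAD (MSE_N N η Δ μ ν) (PA_N N η Δ μ ν)} =
      sSup {u : ℝ | ∃ κ : Measure ℝ, IsProbabilityMeasure κ ∧
        0 < PA_2 η Δ μ κ ∧ u = QAD (MSE_2 η Δ μ κ) (PA_2 η Δ μ κ)} ∧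
    ∀ (νs : Measure (Fin (N-1) → ℝ)) (κs : Measure ℝ),
      IsBestResponseN N η Δ μ QAD νs → IsBestResponse2 η Δ μ QAD κs →
      QAD (MSE_N N η Δ μ νs) (PA_N N η Δ μ νs) = QAD (MSE_2 η Δ μ κs) (PA_2 η Δ μ κs) := by
  have : Nonempty (Fin (N-1)) := ⟨⟨0, by omega⟩⟩
  have hsup : sSup (utilitiesN N η Δ μ QAD) = sSup (utilities2 η Δ μ QAD) :=
    csSup_eq_csSup_of_forall_exists_le (exists_utilities2_ge hΔ hη hμ fun y => (hQ1 y).monotone)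
      fun v hv => ⟨v, utilities2_subset_utilitiesN hv, le_rfl⟩
  refine ⟨hsup, fun νs κs hνs hκs => ?_⟩
  rw [← hνs.isGreatest.csSup_eq, ← hκs.isGreatest.csSup_eq, hsup]

theorem stmt14 {N : ℕ} (hN : 2 ≤ N) {η Δ : ℝ} (hΔ : 0 < Δ) (hη : 2 ≤ η)
    (μ : Measure ℝ) [IsProbabilityMeasure μ] (hμ : μ (Set.Icc (-Δ) Δ) = 1)
    (QAD : ℝ → ℝ → ℝ)
    (hQ1 : ∀ y : ℝ, StrictMono fun x => QAD x y) (hQ2 : ∀ x : ℝ, StrictMono (QAD x)) :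
    sSup {u : ℝ | ∃ ν : Measure (Fin (N-1) → ℝ), IsProbabilityMeasure ν ∧
        0 < PA_N N η Δ μ ν ∧ u = QAD (MSE_N N η Δ μ ν) (PA_N N η Δ μ ν)} =
      sSup {u : ℝ | ∃ κ : Measure ℝ, IsProbabilityMeasure κ ∧
        0 < PA_2 η Δ μ κ ∧ u = QAD (MSE_2 η Δ μ κ) (PA_2 η Δ μ κ)} ∧
    ∀ (νs : Measure (Fin (N-1) → ℝ)) (κs : Measure ℝ),
      IsBestResponseN N η Δ μ QAD νs → IsBestResponse2 η Δ μ QAD κs →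
      QAD (MSE_N N η Δ μ νs) (PA_N N η Δ μ νs) = QAD (MSE_2 η Δ μ κs) (PA_2 η Δ μ κs) :=
  stmt14_general hN hΔ hη μ hμ QAD hQ1
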